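/- Let a, â, b, b̂ be real numbers and define B(x,y) = (1+xy)/sqrt((1+x^2)(1+y^2)). If |â - a| ≤ t and |b̂ - b| ≤ t for some t ≥ 0, then |B(â,b̂) - B(a,b)| ≤ 2t. -/

import Mathlib

/-!
`B(a, b) = cos (arctan a - arctan b)` is the cosine of the angle between the vectors `(1, a)` and
`(1, b)`. Since `cos` and `arctan` are both 1-Lipschitz, `B` is 1-Lipschitz in each variable.
-/

open Real

noncomputable def skewB (a b : ℝ) : ℝ := (1 + a * b) / Real.sqrt ((1 + a ^ 2) * (1 + b ^ 2))

lemma skewB_eq_cos_arctan_sub_arctan (a b : ℝ) : skewB a b = cos (arctan a - arctan b) := by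
  have ha : √(1 + a ^ 2) ≠ 0 := by positivity
  have hb : √(1 + b ^ 2) ≠ 0 := by positivity
  rw [cos_sub, cos_arctan, cos_arctan, sin_arctan, sin_arctan, skewB, sqrt_mul (by positivity)]
  field_simp

lemma lipschitzWith_arctan : LipschitzWith 1 arctan := by
  refine lipschitzWith_of_nnnorm_deriv_le differentiable_arctan fun x => ?_
  rw [← NNReal.coe_le_coe, coe_nnnorm, Real.deriv_arctan, norm_div, norm_one, NNReal.coe_one]
  exact div_le_one_of_le₀ (by rw [norm_of_nonneg (by positivity)]; nlinarith) (norm_nonneg _)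

lemma abs_arctan_sub_arctan_le (x y : ℝ) : |arctan x - arctan y| ≤ |x - y| := by
  simpa [edist_dist] using! lipschitzWith_arctan x y

lemma abs_skewB_sub_skewB_le (a a' b b' : ℝ) :
    |skewB a' b' - skewB a b| ≤ |a' - a| + |b' - b| := by
  rw [skewB_eq_cos_arctan_sub_arctan, skewB_eq_cos_arctan_sub_arctan]
  calc |cos (arctan a' - arctan b') - cos (arctan a - arctan b)|
      ≤ |(arctan a' - arctan a) - (arctan b' - arctan b)| := by
        convert abs_cos_sub_cos_le _ _ using 2; ring
    _ ≤ |arctan a' - arctan a| + |arctan b' - arctan b| := abs_sub _ _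
    _ ≤ |a' - a| + |b' - b| :=
        add_le_add (abs_arctan_sub_arctan_le _ _) (abs_arctan_sub_arctan_le _ _)

theorem skewB_plugin_error_general (a ahat b bhat t : ℝ)
    (ha : |ahat - a| ≤ t) (hb : |bhat - b| ≤ t) :
    |skewB ahat bhat - skewB a b| ≤ 2 * t := by
  linarith [abs_skewB_sub_skewB_le a ahat b bhat]

theorem skewB_plugin_error (a ahat b bhat t : ℝ) (ht : 0 ≤ t)
    (ha : |ahat - a| ≤ t) (hb : |bhat - b| ≤ t) :
    |skewB ahat bhat - skewB a b| ≤ 2 * t :=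
  skewB_plugin_error_general a ahat b bhat t ha hb
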